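/- arXiv:2102.04048 — 4 statements merged into one kernel-verified Lean document; each statement's English description precedes it below -/
import Mathlib

section
/- For every 3×3 real positive definite matrix Σ and every m×3 real matrix B (m ≥ 1), there exist two invertible 3×3 real matrices A₀ and A₀′, each satisfying the zero restrictions (·)₂₁ = (·)₃₁ = 0 and ((·)⁻¹ᵀ)₁₂ = 0, with (A₀A₀ᵀ)⁻¹ = (A₀′A₀′ᵀ)⁻¹ = Σ, such that A₀′ ≠ A₀D for every 3×3 diagonal matrix D with diagonal entries in {1, −1}. Consequently, setting A₊ = BA₀ and A₊′ = BA₀′, the two structural parameter points (A₀, A₊) and (A₀′, A₊′) satisfy all the imposed restrictions, map to the same reduced-form parameters (B, Σ), and are not related by any sign normalization; hence the trivariate SVAR with these restrictions is not globally identified, even though the restriction counts q₁ = 2, q₂ = 1, q₃ = 0 satisfy the rank condition qⱼ = n − j of Theorem 7 of Rubio-Ramírez, Waggoner, and Zha (2010). -/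
/-!
Write `Σ = L Lᵀ` with `L` lower triangular (Cholesky) and put `A₀ = (L⁻¹)ᵀ`, which is upper
triangular with `(A₀ A₀ᵀ)⁻¹ = Σ` and `IR₀ = L`. All three zero restrictions only ask `A₀` to be
block upper triangular for the partition `{1} ∪ {2, 3}` of the variables, a property that
survives inversion and right multiplication by any block diagonal matrix. So `A₀' = A₀ Q`, with
`Q` the quarter turn in the plane of the last two variables, satisfies the restrictions as well,
and `A₀' A₀'ᵀ = A₀ A₀ᵀ` because `Q` is orthogonal; but `Q` is not a sign matrix.
-/

open Matrix

namespace Matrix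

theorem PosDef.exists_isLowerTriangular_mul_transpose_eq {n : Type*} [Fintype n] [LinearOrder n]
    [WellFoundedLT n] [LocallyFiniteOrderBot n] {S : Matrix n n ℝ} (hS : S.PosDef) :
    ∃ L : Matrix n n ℝ, L.IsLowerTriangular ∧ L * Lᵀ = S := by
  have hdiag : (LDL.diag hS).PosDef := by
    rw [LDL.diag_eq_lowerInv_conj]
    exact hS.mul_mul_conjTranspose_same (vecMul_injective_of_isUnit (isUnit_of_invertible _))
  have hpos (i : n) : 0 < LDL.diagEntries hS i := by
    simpa [LDL.diag] using hdiag.diag_pos (i := i)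
  refine ⟨LDL.lower hS * diagonal fun i => √(LDL.diagEntries hS i), ?_, ?_⟩
  · have hinv : (LDL.lowerInv hS).IsLowerTriangular := fun _ _ => LDL.lowerInv_triangular hS
    exact (blockTriangular_inv_of_blockTriangular hinv).mul (blockTriangular_diagonal _)
  · have hsq : (diagonal fun i => √(LDL.diagEntries hS i)) *
        (diagonal fun i => √(LDL.diagEntries hS i))ᵀ = LDL.diag hS := by
      simp only [diagonal_transpose, diagonal_mul_diagonal, Real.mul_self_sqrt (hpos _).le]
      rfl
    rw [transpose_mul, Matrix.mul_assoc, ← Matrix.mul_assoc _ _ (LDL.lower hS)ᵀ, hsq,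
      ← conjTranspose_eq_transpose_of_trivial, ← Matrix.mul_assoc, LDL.lower_conj_diag]

theorem PosDef.exists_isUpperTriangular_inv_mul_transpose_eq {n : Type*} [Fintype n]
    [LinearOrder n] [WellFoundedLT n] [LocallyFiniteOrderBot n] {S : Matrix n n ℝ}
    (hS : S.PosDef) : ∃ A : Matrix n n ℝ, IsUnit A.det ∧ A.IsUpperTriangular ∧ (A * Aᵀ)⁻¹ = S := by
  obtain ⟨L, hLtri, hLS⟩ := hS.exists_isLowerTriangular_mul_transpose_eq
  have hL : IsUnit L.det := by
    have : L.det * L.det = S.det := by rw [← hLS, det_mul, det_transpose]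
    exact isUnit_iff_ne_zero.mpr fun h => hS.det_pos.ne' (by rw [← this, h, zero_mul])
  have := L.invertibleOfIsUnitDet hL
  refine ⟨L⁻¹ᵀ, by simpa using isUnit_nonsing_inv_det L hL,
    fun _ _ hij => blockTriangular_inv_of_blockTriangular hLtri hij, ?_⟩
  rw [transpose_transpose, transpose_nonsing_inv, ← mul_inv_rev, hLS,
    nonsing_inv_nonsing_inv _ ((isUnit_iff_isUnit_det S).mp hS.isUnit)]

theorem IsUpperTriangular.blockTriangular {n α R : Type*} [LinearOrder n] [Preorder α] [Zero R]
    {M : Matrix n n R} (hM : M.IsUpperTriangular) {b : n → α} (hb : Monotone b) :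
    M.BlockTriangular b :=
  fun _ _ hij => hM (hb.reflect_lt hij)

theorem mul_mul_transpose_of_mul_transpose_eq_one {n R : Type*} [Fintype n] [DecidableEq n]
    [CommSemiring R] (A : Matrix n n R) {Q : Matrix n n R} (hQ : Q * Qᵀ = 1) : A * Q * (A * Q)ᵀ = A * Aᵀ := by
  rw [transpose_mul, Matrix.mul_assoc, ← Matrix.mul_assoc Q, hQ, Matrix.one_mul]

theorem mul_ne_mul_of_isUnit_det {n R : Type*} [Fintype n] [DecidableEq n] [CommRing R]
    {A P Q : Matrix n n R} (hA : IsUnit A.det) (h : P ≠ Q) : A * P ≠ A * Q :=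
  fun hPQ => h (((isUnit_iff_isUnit_det A).mpr hA).mul_left_cancel hPQ)

end Matrix

section Trivariate

variable {R : Type*} [CommRing R]

-- Indices are 0-based: these are the paper's `(A₀)₂₁`, `(A₀)₃₁` and `(IR₀)₁₂`.
def SatisfiesZeroRestrictions (A : Matrix (Fin 3) (Fin 3) R) : Prop :=
  A 1 0 = 0 ∧ A 2 0 = 0 ∧ A⁻¹ᵀ 0 1 = 0

-- `min · 1` sends the first index to block `0` and the other two to block `1`.
theorem satisfiesZeroRestrictions_of_blockTriangular {A : Matrix (Fin 3) (Fin 3) R}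
    (hA : A.BlockTriangular (min · 1)) (hdet : IsUnit A.det) : SatisfiesZeroRestrictions A := by
  have := A.invertibleOfIsUnitDet hdet
  exact ⟨hA (by decide), hA (by decide), blockTriangular_inv_of_blockTriangular hA (by decide)⟩

def rotation₁₂ : Matrix (Fin 3) (Fin 3) R := !![1, 0, 0; 0, 0, -1; 0, 1, 0]

theorem rotation₁₂_mul_transpose : (rotation₁₂ : Matrix (Fin 3) (Fin 3) R) * rotation₁₂ᵀ = 1 := by
  ext i j
  fin_cases i <;> fin_cases j <;> simp [rotation₁₂, Matrix.mul_apply, Fin.sum_univ_three]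

theorem rotation₁₂_blockTriangular :
    (rotation₁₂ : Matrix (Fin 3) (Fin 3) R).BlockTriangular (min · 1) := by
  intro i j hij
  fin_cases i <;> fin_cases j <;> simp_all [rotation₁₂]

theorem rotation₁₂_ne_diagonal [Nontrivial R] (d : Fin 3 → R) : rotation₁₂ ≠ diagonal d := by
  intro h
  simpa [rotation₁₂] using congrFun (congrFun h 1) 2

end Trivariate

theorem not_globally_identified_general
    (Sig : Matrix (Fin 3) (Fin 3) ℝ) (hSig : Sig.PosDef)
    (m : ℕ) (B : Matrix (Fin m) (Fin 3) ℝ) :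
    ∃ A₀ A₀' : Matrix (Fin 3) (Fin 3) ℝ,
      IsUnit A₀.det ∧ IsUnit A₀'.det ∧
      A₀ 1 0 = 0 ∧ A₀ 2 0 = 0 ∧ (A₀⁻¹)ᵀ 0 1 = 0 ∧
      A₀' 1 0 = 0 ∧ A₀' 2 0 = 0 ∧ (A₀'⁻¹)ᵀ 0 1 = 0 ∧
      (A₀ * A₀ᵀ)⁻¹ = Sig ∧ (A₀' * A₀'ᵀ)⁻¹ = Sig ∧
      (∀ d : Fin 3 → ℝ, (∀ i, d i = 1 ∨ d i = -1) → A₀' ≠ A₀ * Matrix.diagonal d) ∧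
      (B * A₀) * A₀⁻¹ = B ∧ (B * A₀') * A₀'⁻¹ = B := by
  obtain ⟨A, hAdet, hAtri, hASig⟩ := hSig.exists_isUpperTriangular_inv_mul_transpose_eq
  have hAblock : A.BlockTriangular (min · 1) :=
    hAtri.blockTriangular fun _ _ hij => min_le_min_right 1 hij
  have hA'det : IsUnit (A * rotation₁₂).det :=
    det_mul A _ ▸ hAdet.mul (isUnit_det_of_right_inverse rotation₁₂_mul_transpose)
  obtain ⟨hA₁₀, hA₂₀, hAinv₀₁⟩ := satisfiesZeroRestrictions_of_blockTriangular hAblock hAdet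
  obtain ⟨hA'₁₀, hA'₂₀, hA'inv₀₁⟩ := satisfiesZeroRestrictions_of_blockTriangular
    (hAblock.mul rotation₁₂_blockTriangular) hA'det
  refine ⟨A, A * rotation₁₂, hAdet, hA'det, hA₁₀, hA₂₀, hAinv₀₁, hA'₁₀, hA'₂₀, hA'inv₀₁, hASig,
    by rw [mul_mul_transpose_of_mul_transpose_eq_one A rotation₁₂_mul_transpose, hASig],
    fun d _ => mul_ne_mul_of_isUnit_det hAdet (rotation₁₂_ne_diagonal d),
    mul_nonsing_inv_cancel_right _ B hAdet, mul_nonsing_inv_cancel_right _ B hA'det⟩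

/-- For every 3×3 positive definite `Sig` and every `m×3` matrix `B` (`m ≥ 1`)
there exist two invertible matrices `A₀`, `A₀'` both satisfying the restrictions
`(·)₂₁ = (·)₃₁ = 0` and `((·)⁻¹ᵀ)₁₂ = 0` and `(· ·ᵀ)⁻¹ = Sig`, which are not related by any
sign-normalization `D = diag(±1)`.  Setting `A₊ = B A₀` and `A₊' = B A₀'`, both structural
points map to the same reduced form `(B, Sig)`: the SVAR is not globally identified even
though the restriction counts satisfy `qⱼ = n − j`. -/
theorem not_globally_identified
    (Sig : Matrix (Fin 3) (Fin 3) ℝ) (hSig : Sig.PosDef)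
    (m : ℕ) (hm : 1 ≤ m) (B : Matrix (Fin m) (Fin 3) ℝ) :
    ∃ A₀ A₀' : Matrix (Fin 3) (Fin 3) ℝ,
      IsUnit A₀.det ∧ IsUnit A₀'.det ∧
      A₀ 1 0 = 0 ∧ A₀ 2 0 = 0 ∧ (A₀⁻¹)ᵀ 0 1 = 0 ∧
      A₀' 1 0 = 0 ∧ A₀' 2 0 = 0 ∧ (A₀'⁻¹)ᵀ 0 1 = 0 ∧
      (A₀ * A₀ᵀ)⁻¹ = Sig ∧ (A₀' * A₀'ᵀ)⁻¹ = Sig ∧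
      (∀ d : Fin 3 → ℝ, (∀ i, d i = 1 ∨ d i = -1) → A₀' ≠ A₀ * Matrix.diagonal d) ∧
      (B * A₀) * A₀⁻¹ = B ∧ (B * A₀') * A₀'⁻¹ = B :=
  not_globally_identified_general Sig hSig m B
end

section
/- Let A₀ be an invertible 3×3 real matrix with (A₀)₂₁ = (A₀)₃₁ = 0. Then the 3×3 real matrix whose first row is the first row of (A₀⁻¹)ᵀ, whose second row is (1, 0, 0), and whose third row is (0, 1, 0), has rank exactly 2. In particular, the rank condition 'rank equal to 3' of Theorem 6 of Rubio-Ramírez, Waggoner, and Zha (2010) fails at j = 2 for the counterexample restrictions. -/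
/-!
Since the first column of `A₀` is `(a, 0, 0)`, the first column of `A₀⁻¹` is `(a⁻¹, 0, 0)`.
So the first row of the matrix in question is a multiple of its second row `(1, 0, 0)`,
and the remaining rows `(1, 0, 0)`, `(0, 1, 0)` are independent.
-/

open Matrix

namespace Matrix

variable {n R : Type*} [Fintype n] [DecidableEq n] [CommRing R]

theorem inv_apply_mul_apply_of_forall_apply_eq_zero (A : Matrix n n R) (hA : IsUnit A.det)
    {j : n} (hcol : ∀ i ≠ j, A i j = 0) (i : n) : A⁻¹ i j * A j j = (1 : Matrix n n R) i j := by
  rw [← A.nonsing_inv_mul hA, mul_apply, Finset.sum_eq_single j]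
  · exact fun k _ hk => by rw [hcol k hk, mul_zero]
  · exact fun hj => absurd (Finset.mem_univ j) hj

theorem inv_apply_eq_zero_of_forall_apply_eq_zero (A : Matrix n n R) (hA : IsUnit A.det)
    {j : n} (hcol : ∀ i ≠ j, A i j = 0) {i : n} (hij : i ≠ j) : A⁻¹ i j = 0 := by
  have hjj : IsUnit (A j j) :=
    IsUnit.of_mul_eq_one_right _ <| by
      simpa using A.inv_apply_mul_apply_of_forall_apply_eq_zero hA hcol j
  have := A.inv_apply_mul_apply_of_forall_apply_eq_zero hA hcol i
  rwa [one_apply_ne hij, hjj.mul_left_eq_zero] at this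

end Matrix

theorem rank_rows_c00_100_010_eq_two {K : Type*} [Field K] (c : K) :
    (Matrix.of ![![c, 0, 0], ![1, 0, 0], ![0, 1, 0]]).rank = 2 := by
  -- the left factor has determinant `1` whatever `c` is
  have hfactor : Matrix.of ![![c, 0, 0], ![1, 0, 0], ![0, 1, 0]] =
      Matrix.of ![![c, 0, 1], ![1, 0, 0], ![0, 1, 0]] * diagonal ![(1 : K), 1, 0] := by
    ext i j
    fin_cases i <;> fin_cases j <;> simp [mul_apply, Fin.sum_univ_three]
  classical
  rw [hfactor, rank_mul_eq_right_of_isUnit_det _ _ (by simp [det_fin_three]), rank_diagonal,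
    Fintype.card_subtype]
  simp [Finset.filter_insert, Fin.univ_succ]

/-- For an invertible 3×3 real matrix `A₀` with `(A₀)₂₁ = (A₀)₃₁ = 0`,
the matrix whose first row is the first row of `(A₀⁻¹)ᵀ`, second row `(1,0,0)`, and third row
`(0,1,0)` has rank exactly 2 (the rank condition `rank = 3` of Theorem 6 of RWZ fails at
`j = 2`). -/
theorem rank_condition_fails
    (A₀ : Matrix (Fin 3) (Fin 3) ℝ) (hA : IsUnit A₀.det)
    (h21 : A₀ 1 0 = 0) (h31 : A₀ 2 0 = 0) :
    (Matrix.of ![(A₀⁻¹)ᵀ 0, ![1, 0, 0], ![0, 1, 0]]).rank = 2 := by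
  have hcol : ∀ i ≠ 0, A₀ i 0 = 0 := by
    intro i hi
    fin_cases i
    exacts [absurd rfl hi, h21, h31]
  have hrow : (A₀⁻¹)ᵀ 0 = ![A₀⁻¹ 0 0, 0, 0] := by
    ext i
    fin_cases i
    exacts [rfl, A₀.inv_apply_eq_zero_of_forall_apply_eq_zero hA hcol (by decide),
      A₀.inv_apply_eq_zero_of_forall_apply_eq_zero hA hcol (by decide)]
  rw [hrow]
  exact rank_rows_c00_100_010_eq_two _
end

section
/- Fix integers n ≥ 1, m ≥ 1, k ≥ 1 and assume f is admissible. If qⱼ = n − j for every j = 1, …, n and the restrictions are non-redundant at every reduced-form point (B, L) with ((L⁻¹)ᵀ, B(L⁻¹)ᵀ) ∈ U, then for every (A₀, A₊) ∈ U there exists an n×n orthogonal matrix P such that (A₀P, A₊P) ∈ R. -/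
/-!
A structural point `(A₀, A₊)` with `A₀` invertible is an orthogonal rotation of the structural
point `((L⁻¹)ᵀ, B (L⁻¹)ᵀ)` of its own reduced form, `L` being the Cholesky factor of
`(A₀ A₀ᵀ)⁻¹`. Non-redundancy there supplies orthonormal `p₁, …, pₙ` with `Qⱼ f pⱼ = 0`, and by
admissibility rotating by the orthogonal matrix with columns `pⱼ` turns these into the
restrictions `Qⱼ f eⱼ = 0`. The sign normalization `diag(±1)` only rescales columns of `f`, so it
keeps the restrictions.
-/

open Matrix MeasureTheory

noncomputable section

/-- A structural parameter point `(A₀, A₊)`. -/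
abbrev Struct (n m : ℕ) : Type :=
  Matrix (Fin n) (Fin n) ℝ × Matrix (Fin m) (Fin n) ℝ

/-- Index set of the lower-triangular entries of an `n×n` matrix. -/
abbrev LowIdx (n : ℕ) : Type := {p : Fin n × Fin n // p.2 ≤ p.1}

/-- The reduced-form parameter space: a pair `(B, ℓ)` where `ℓ` lists the lower-triangular
entries of the Cholesky factor `L`.  This identifies the reduced-form parameter space with
(an open subset of) `ℝ^{mn + n(n+1)/2}`, carrying Lebesgue measure. -/
abbrev RedParam (n m : ℕ) : Type := ((Fin m) → (Fin n) → ℝ) × (LowIdx n → ℝ)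

/-- The lower-triangular matrix `L` encoded by `ℓ`. -/
def cholOf {n : ℕ} (ℓ : LowIdx n → ℝ) : Matrix (Fin n) (Fin n) ℝ :=
  Matrix.of fun i j => if h : j ≤ i then ℓ ⟨(i, j), h⟩ else 0

/-- The reduced-form point `(B, ℓ)` is admissible: `L` has strictly positive diagonal. -/
def PosDiag {n : ℕ} (ℓ : LowIdx n → ℝ) : Prop :=
  ∀ i : Fin n, 0 < ℓ ⟨(i, i), le_rfl⟩

/-- The structural point `(A₀, A₊) = ((L⁻¹)ᵀ, B (L⁻¹)ᵀ)` induced by a reduced-form point. -/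
def structOf {n m : ℕ} (r : RedParam n m) : Struct n m :=
  (((cholOf r.2)⁻¹)ᵀ, Matrix.of r.1 * ((cholOf r.2)⁻¹)ᵀ)

/-- `P` is an orthogonal matrix. -/
def IsOrthogonalMat {n : ℕ} (P : Matrix (Fin n) (Fin n) ℝ) : Prop := P * Pᵀ = 1

/-- Stack a `k×n` matrix `G` on top of the `s` row vectors `p 0, …, p (s-1)`. -/
def stack {k s n : ℕ} (G : Matrix (Fin k) (Fin n) ℝ) (p : Fin s → Fin n → ℝ) :
    Matrix (Fin (k + s)) (Fin n) ℝ :=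
  Matrix.of (Fin.append (fun i => G i) p)

/-- `f` is admissible on `U`: `f(A₀P, A₊P) = f(A₀, A₊)P` for every orthogonal `P`. -/
def Admissible {n m k : ℕ} (U : Set (Struct n m))
    (f : Struct n m → Matrix (Fin k) (Fin n) ℝ) : Prop :=
  ∀ x ∈ U, ∀ P : Matrix (Fin n) (Fin n) ℝ, IsOrthogonalMat P →
    f (x.1 * P, x.2 * P) = f x * P

/-- Coordinates version of the structural space, used to state smoothness. -/
abbrev PiStruct (n m : ℕ) : Type := ((Fin n) → (Fin n) → ℝ) × ((Fin m) → (Fin n) → ℝ)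

/-- Reinterpret coordinates as a structural point. -/
def toStruct {n m : ℕ} (x : PiStruct n m) : Struct n m := (Matrix.of x.1, Matrix.of x.2)

/-- `f` is regular on `U`: `U` is open and `f` is continuously differentiable on `U` with
surjective total derivative (rank `kn`) at every point of `U`. -/
def Regular {n m k : ℕ} (U : Set (Struct n m))
    (f : Struct n m → Matrix (Fin k) (Fin n) ℝ) : Prop :=
  IsOpen U ∧
  ContDiffOn ℝ 1 (fun x : PiStruct n m => fun i j => f (toStruct x) i j)
    (toStruct ⁻¹' U) ∧
  ∀ x ∈ toStruct ⁻¹' U,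
    Function.Surjective
      (fderivWithin ℝ (fun y : PiStruct n m => fun i j => f (toStruct y) i j)
        (toStruct ⁻¹' U) x)

/-- `f` is strongly regular on `U`: regular and with image dense in the `k×n` matrices. -/
def StronglyRegular {n m k : ℕ} (U : Set (Struct n m))
    (f : Struct n m → Matrix (Fin k) (Fin n) ℝ) : Prop :=
  Regular U f ∧
  Dense ((fun x : PiStruct n m => fun i j => f (toStruct x) i j) '' (toStruct ⁻¹' U))

/-- `N` is a normalization rule: every structural point has a unique sign normalization
`D = diag(±1)` with `(A₀D, A₊D) ∈ N`. -/
def IsNormalization {n m : ℕ} (N : Set (Struct n m)) : Prop :=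
  ∀ x : Struct n m, IsUnit x.1 →
    ∃! d : Fin n → ℝ, (∀ i, d i = 1 ∨ d i = -1) ∧
      (x.1 * Matrix.diagonal d, x.2 * Matrix.diagonal d) ∈ N

/-- The restricted set `R = {(A₀,A₊) ∈ U ∩ N : Qⱼ f(A₀,A₊) eⱼ = 0, j = 1,…,n}`. -/
def RSet {n m k : ℕ} (U N : Set (Struct n m))
    (f : Struct n m → Matrix (Fin k) (Fin n) ℝ)
    (Q : Fin n → Matrix (Fin k) (Fin k) ℝ) : Set (Struct n m) :=
  {x | x ∈ U ∩ N ∧ ∀ (j : Fin n) (i : Fin k), (Q j * f x) i j = 0}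

/-- The restrictions are non-redundant at the reduced-form point `r = (B, ℓ)`: with
`(A₀, A₊) = ((L⁻¹)ᵀ, B(L⁻¹)ᵀ)`, there exist orthonormal vectors `p₁, …, pₙ` such that for
every `j`, `Qⱼ f(A₀,A₊) pⱼ = 0` and the matrix `Q̃ⱼ` obtained by stacking `Qⱼ f(A₀,A₊)` on
top of the rows `p₁ᵀ, …, p_{j-1}ᵀ` has rank `n - 1`. -/
def NonRedundantAt {n m k : ℕ}
    (f : Struct n m → Matrix (Fin k) (Fin n) ℝ)
    (Q : Fin n → Matrix (Fin k) (Fin k) ℝ) (r : RedParam n m) : Prop :=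
  ∃ p : Fin n → Fin n → ℝ,
    (∀ i j : Fin n, p i ⬝ᵥ p j = if i = j then 1 else 0) ∧
    ∀ j : Fin n,
      (Q j * f (structOf r)).mulVec (p j) = 0 ∧
      (stack (Q j * f (structOf r))
        (fun i : Fin j.val => p (Fin.castLE j.isLt.le i))).rank = n - 1

/-- The SVAR is exactly identified: for Lebesgue-almost every reduced-form point `(B, L)`
there is a unique structural point in `R` mapping to it under `g`. -/
def ExactlyIdentified {n m k : ℕ} (U N : Set (Struct n m))
    (f : Struct n m → Matrix (Fin k) (Fin n) ℝ)
    (Q : Fin n → Matrix (Fin k) (Fin k) ℝ) : Prop :=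
  ∀ᵐ r : RedParam n m, PosDiag r.2 →
    ∃! x : Struct n m, x ∈ RSet U N f Q ∧
      x.2 * x.1⁻¹ = Matrix.of r.1 ∧
      (x.1 * x.1ᵀ)⁻¹ = cholOf r.2 * (cholOf r.2)ᵀ

theorem Matrix.diagonal_mul_transpose_diagonal_eq_one {ι : Type*} [Fintype ι] [DecidableEq ι]
    {d : ι → ℝ} (hd : ∀ i, d i = 1 ∨ d i = -1) : diagonal d * (diagonal d)ᵀ = 1 := by
  rw [diagonal_transpose, diagonal_mul_diagonal, ← diagonal_one]
  congr 1
  funext i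
  rcases hd i with h | h <;> simp [h]

section Cholesky

variable {ι : Type*} [LinearOrder ι] [WellFoundedLT ι] [LocallyFiniteOrderBot ι] [Fintype ι]

theorem Matrix.PosDef.exists_isLowerTriangular_mul_transpose_eq_s7 {S : Matrix ι ι ℝ}
    (hS : S.PosDef) : ∃ L : Matrix ι ι ℝ, L.IsLowerTriangular ∧ L * Lᵀ = S := by
  classical
  have := LDL.invertibleLowerInv hS
  have hD : (LDL.diag hS).PosDef := by
    rw [LDL.diag_eq_lowerInv_conj]
    exact hS.mul_mul_conjTranspose_same
      (vecMul_injective_iff_isUnit.mpr (isUnit_of_invertible _))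
  set s : ι → ℝ := fun i => √(LDL.diagEntries hS i)
  have hs : diagonal s * (diagonal s)ᵀ = LDL.diag hS := by
    rw [diagonal_transpose, diagonal_mul_diagonal, LDL.diag]
    congr 1
    funext i
    have := hD.diag_pos (i := i)
    simp only [LDL.diag, diagonal_apply_eq] at this
    exact Real.mul_self_sqrt this.le
  refine ⟨LDL.lower hS * diagonal s, ?_, ?_⟩
  · have hinv : (LDL.lowerInv hS).IsLowerTriangular := fun _ _ hij =>
      LDL.lowerInv_triangular hS hij
    exact (blockTriangular_inv_of_blockTriangular hinv).mul (blockTriangular_diagonal _)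
  · calc LDL.lower hS * diagonal s * (LDL.lower hS * diagonal s)ᵀ
        = LDL.lower hS * (diagonal s * (diagonal s)ᵀ) * (LDL.lower hS)ᴴ := by
          simp only [transpose_mul, conjTranspose_eq_transpose_of_trivial, Matrix.mul_assoc]
      _ = S := by rw [hs, LDL.lower_conj_diag]

theorem Matrix.PosDef.exists_isLowerTriangular_diag_pos_mul_transpose_eq {S : Matrix ι ι ℝ}
    (hS : S.PosDef) :
    ∃ L : Matrix ι ι ℝ, L.IsLowerTriangular ∧ (∀ i, 0 < L i i) ∧ L * Lᵀ = S := by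
  classical
  obtain ⟨L, hLtri, hLS⟩ := hS.exists_isLowerTriangular_mul_transpose_eq_s7
  have hdiag : ∀ i, L i i ≠ 0 := by
    have hdet : (L * Lᵀ).det ≠ 0 := hLS ▸ hS.det_pos.ne'
    rw [det_mul, det_transpose, det_of_isLowerTriangular L hLtri, ← Finset.prod_mul_distrib,
      Finset.prod_ne_zero_iff] at hdet
    exact fun i => left_ne_zero_of_mul (hdet i (Finset.mem_univ i))
  set e : ι → ℝ := fun i => if 0 < L i i then 1 else -1
  have he : ∀ i, e i = 1 ∨ e i = -1 := fun i => by by_cases h : 0 < L i i <;> simp [e, h]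
  refine ⟨L * diagonal e, hLtri.mul (blockTriangular_diagonal _), fun i => ?_, ?_⟩
  · rw [mul_diagonal]
    by_cases h : 0 < L i i
    · simp [e, h]
    · simpa [e, h] using lt_of_le_of_ne (not_lt.mp h) (hdiag i)
  · rw [transpose_mul, Matrix.mul_assoc, ← Matrix.mul_assoc (diagonal e),
      diagonal_mul_transpose_diagonal_eq_one he, Matrix.one_mul, hLS]

end Cholesky

section Orthogonal

variable {n : ℕ}

theorem IsOrthogonalMat.mul {P R : Matrix (Fin n) (Fin n) ℝ} (hP : IsOrthogonalMat P)
    (hR : IsOrthogonalMat R) : IsOrthogonalMat (P * R) := by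
  rw [IsOrthogonalMat, transpose_mul, Matrix.mul_assoc, ← Matrix.mul_assoc R, hR,
    Matrix.one_mul, hP]

theorem isOrthogonalMat_inv_mul_of_mul_transpose_eq {A B : Matrix (Fin n) (Fin n) ℝ}
    (hA : IsUnit A) (h : A * Aᵀ = B * Bᵀ) : IsOrthogonalMat (A⁻¹ * B) := by
  have hdet : IsUnit A.det := (isUnit_iff_isUnit_det A).mp hA
  calc A⁻¹ * B * (A⁻¹ * B)ᵀ = A⁻¹ * (B * Bᵀ) * A⁻¹ᵀ := by
        simp only [transpose_mul, Matrix.mul_assoc]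
    _ = (A⁻¹ * A) * (Aᵀ * Aᵀ⁻¹) := by
        rw [← h, transpose_nonsing_inv]
        simp only [Matrix.mul_assoc]
    _ = 1 := by
        rw [nonsing_inv_mul _ hdet, mul_nonsing_inv _ (by rwa [det_transpose]), Matrix.one_mul]

theorem isOrthogonalMat_transpose_of_orthonormal {p : Fin n → Fin n → ℝ}
    (hp : ∀ i j, p i ⬝ᵥ p j = if i = j then 1 else 0) : IsOrthogonalMat (of p)ᵀ := by
  have hrows : of p * (of p)ᵀ = 1 := by
    ext i j
    simpa [mul_apply, one_apply, dotProduct] using hp i j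
  rw [IsOrthogonalMat, transpose_transpose]
  exact mul_eq_one_comm.mp hrows

end Orthogonal

theorem exists_posDiag_cholOf_eq {n : ℕ} {L : Matrix (Fin n) (Fin n) ℝ}
    (hL : L.IsLowerTriangular) (hpos : ∀ i, 0 < L i i) :
    ∃ ℓ : LowIdx n → ℝ, PosDiag ℓ ∧ cholOf ℓ = L := by
  refine ⟨fun p => L p.1.1 p.1.2, hpos, ?_⟩
  ext i j
  by_cases h : j ≤ i
  · simp [cholOf, h]
  · simp [cholOf, h, hL (show OrderDual.toDual j < OrderDual.toDual i from not_le.mp h)]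

theorem exists_posDiag_structOf_eq_mul {n m : ℕ} {x : Struct n m} (hx : IsUnit x.1) :
    ∃ r : RedParam n m, PosDiag r.2 ∧
      ∃ P, IsOrthogonalMat P ∧ structOf r = (x.1 * P, x.2 * P) := by
  have hdet : IsUnit x.1.det := (isUnit_iff_isUnit_det _).mp hx
  have hS : (x.1 * x.1ᵀ).PosDef := by
    simpa only [conjTranspose_eq_transpose_of_trivial] using
      PosDef.mul_conjTranspose_self x.1 (vecMul_injective_iff_isUnit.mpr hx)
  obtain ⟨L, hLtri, hLpos, hLS⟩ := hS.inv.exists_isLowerTriangular_diag_pos_mul_transpose_eq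
  obtain ⟨ℓ, hℓ, rfl⟩ := exists_posDiag_cholOf_eq hLtri hLpos
  refine ⟨(x.2 * x.1⁻¹, ℓ), hℓ, x.1⁻¹ * (cholOf ℓ)⁻¹ᵀ, ?_, ?_⟩
  · apply isOrthogonalMat_inv_mul_of_mul_transpose_eq hx
    rw [transpose_transpose, transpose_nonsing_inv, ← Matrix.mul_inv_rev, hLS,
      nonsing_inv_nonsing_inv _ ((isUnit_iff_isUnit_det _).mp hS.isUnit)]
  · show ((cholOf ℓ)⁻¹ᵀ, x.2 * x.1⁻¹ * (cholOf ℓ)⁻¹ᵀ) = _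
    rw [← Matrix.mul_assoc, mul_nonsing_inv _ hdet, Matrix.one_mul, Matrix.mul_assoc]

/-- `x ∈ RSet U N f Q` unfolds to `x ∈ U ∩ N ∧ SatisfiesRestrictions Q (f x)`. -/
def SatisfiesRestrictions {k n : ℕ} (Q : Fin n → Matrix (Fin k) (Fin k) ℝ)
    (F : Matrix (Fin k) (Fin n) ℝ) : Prop :=
  ∀ (j : Fin n) (i : Fin k), (Q j * F) i j = 0

section Restrictions

variable {k n : ℕ} {Q : Fin n → Matrix (Fin k) (Fin k) ℝ} {F : Matrix (Fin k) (Fin n) ℝ}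

theorem satisfiesRestrictions_mul_transpose_of_mulVec_eq_zero {p : Fin n → Fin n → ℝ}
    (h : ∀ j, (Q j * F) *ᵥ p j = 0) : SatisfiesRestrictions Q (F * (of p)ᵀ) := by
  intro j i
  rw [← Matrix.mul_assoc]
  exact congr_fun (h j) i

theorem SatisfiesRestrictions.mul_diagonal (h : SatisfiesRestrictions Q F) (d : Fin n → ℝ) :
    SatisfiesRestrictions Q (F * diagonal d) := by
  intro j i
  rw [← Matrix.mul_assoc, Matrix.mul_diagonal, h j i, zero_mul]

end Restrictions

theorem exists_orthogonal_into_R_general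
    (n m k : ℕ)
    (U : Set (Struct n m))
    (hUunit : ∀ x ∈ U, IsUnit x.1)
    (hUinv : ∀ x ∈ U, ∀ P : Matrix (Fin n) (Fin n) ℝ,
      IsOrthogonalMat P → (x.1 * P, x.2 * P) ∈ U)
    (f : Struct n m → Matrix (Fin k) (Fin n) ℝ)
    (hf_adm : Admissible U f)
    (N : Set (Struct n m)) (hN : IsNormalization N)
    (Q : Fin n → Matrix (Fin k) (Fin k) ℝ)
    (hnr : ∀ r : RedParam n m, PosDiag r.2 → structOf r ∈ U → NonRedundantAt f Q r) :
    ∀ x ∈ U, ∃ P : Matrix (Fin n) (Fin n) ℝ,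
      IsOrthogonalMat P ∧ (x.1 * P, x.2 * P) ∈ RSet U N f Q := by
  intro x hx
  obtain ⟨r, hr, P₀, hP₀, hrx⟩ := exists_posDiag_structOf_eq_mul (hUunit x hx)
  have hrU : structOf r ∈ U := hrx ▸ hUinv x hx P₀ hP₀
  obtain ⟨p, hp, hpQ⟩ := hnr r hr hrU
  have hP₁ := isOrthogonalMat_transpose_of_orthonormal hp
  set y : Struct n m := ((structOf r).1 * (of p)ᵀ, (structOf r).2 * (of p)ᵀ)
  have hyU : y ∈ U := hUinv _ hrU _ hP₁
  obtain ⟨d, ⟨hd, hdN⟩, -⟩ := hN y (hUunit y hyU)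
  have hD : IsOrthogonalMat (diagonal d) := diagonal_mul_transpose_diagonal_eq_one hd
  refine ⟨P₀ * ((of p)ᵀ * diagonal d), hP₀.mul (hP₁.mul hD), ?_⟩
  have hxy : (x.1 * (P₀ * ((of p)ᵀ * diagonal d)), x.2 * (P₀ * ((of p)ᵀ * diagonal d))) =
      (y.1 * diagonal d, y.2 * diagonal d) := by
    simp only [y, hrx, Matrix.mul_assoc]
  rw [hxy]
  refine ⟨⟨hUinv y hyU _ hD, hdN⟩, ?_⟩
  rw [hf_adm y hyU _ hD, hf_adm _ hrU _ hP₁]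
  exact (satisfiesRestrictions_mul_transpose_of_mulVec_eq_zero fun j => (hpQ j).1).mul_diagonal _

/-- **Lemma 1.**  If `f` is admissible, `qⱼ = n − j` for all `j`, and the
restrictions are non-redundant at every reduced-form point `(B, L)` with
`((L⁻¹)ᵀ, B(L⁻¹)ᵀ) ∈ U`, then every `(A₀, A₊) ∈ U` can be rotated into `R` by some
orthogonal matrix `P`. -/
theorem exists_orthogonal_into_R
    (n m k : ℕ) (hn : 1 ≤ n) (hm : 1 ≤ m) (hk : 1 ≤ k)
    (U : Set (Struct n m))
    (hUunit : ∀ x ∈ U, IsUnit x.1)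
    (hUinv : ∀ x ∈ U, ∀ P : Matrix (Fin n) (Fin n) ℝ,
      IsOrthogonalMat P → (x.1 * P, x.2 * P) ∈ U)
    (f : Struct n m → Matrix (Fin k) (Fin n) ℝ)
    (hf_adm : Admissible U f)
    (N : Set (Struct n m)) (hN : IsNormalization N)
    (Q : Fin n → Matrix (Fin k) (Fin k) ℝ)
    (hQmono : ∀ i j : Fin n, i ≤ j → (Q j).rank ≤ (Q i).rank)
    (hq : ∀ j : Fin n, (Q j).rank = n - (j.val + 1))
    (hnr : ∀ r : RedParam n m, PosDiag r.2 → structOf r ∈ U → NonRedundantAt f Q r) :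
    ∀ x ∈ U, ∃ P : Matrix (Fin n) (Fin n) ℝ,
      IsOrthogonalMat P ∧ (x.1 * P, x.2 * P) ∈ RSet U N f Q :=
  exists_orthogonal_into_R_general n m k U hUunit hUinv f hf_adm N hN Q hnr
end
end

section
/- Let n ≥ 1 and k ≥ 1 be integers, let G₁, …, Gₙ be k×n real matrices, and let p₁, …, pₙ be an orthonormal basis of ℝⁿ such that for every j = 1, …, n, Gⱼ pⱼ = 0 and the (k+j−1)×n matrix obtained by stacking Gⱼ on top of the row vectors p₁ᵀ, …, p_{j−1}ᵀ has rank n − 1. Then for any orthonormal vectors q₁, …, qₙ in ℝⁿ satisfying Gⱼ qⱼ = 0 for every j = 1, …, n, one has qⱼ = pⱼ or qⱼ = −pⱼ for every j. In other words, the orthonormal solution of the sequential orthogonality system is unique up to the sign of each vector. -/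
open Matrix

/-- Membership in the kernel of a stacked matrix. -/
lemma stack_mulVec_eq_zero {k s n : ℕ} (G : Matrix (Fin k) (Fin n) ℝ)
    (p : Fin s → Fin n → ℝ) (v : Fin n → ℝ)
    (hG : G.mulVec v = 0) (hp : ∀ i : Fin s, p i ⬝ᵥ v = 0) :
    (stack G p).mulVec v = 0 := by
  funext r
  refine Fin.addCases (fun i => ?_) (fun i => ?_) r
  · have := congrFun hG i
    simpa [stack, Matrix.mulVec, Fin.append_left] using this
  · simpa [stack, Matrix.mulVec, Fin.append_right] using hp i

/-- Let `p₁, …, pₙ` be an orthonormal basis of `ℝⁿ` with `Gⱼ pⱼ = 0` and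
such that the matrix obtained by stacking `Gⱼ` on top of `p₁ᵀ, …, p_{j-1}ᵀ` has rank `n − 1`
for each `j`.  Then any orthonormal vectors `q₁, …, qₙ` with `Gⱼ qⱼ = 0` satisfy
`qⱼ = ±pⱼ` for every `j`: the orthonormal solution of the sequential orthogonality system is
unique up to the sign of each vector. -/
theorem sequential_solution_unique_up_to_sign
    (n k : ℕ) (hn : 1 ≤ n) (hk : 1 ≤ k)
    (G : Fin n → Matrix (Fin k) (Fin n) ℝ)
    (p : Fin n → Fin n → ℝ)
    (hportho : ∀ i j : Fin n, p i ⬝ᵥ p j = if i = j then 1 else 0)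
    (hpker : ∀ j : Fin n, (G j).mulVec (p j) = 0)
    (hrank : ∀ j : Fin n,
      (stack (G j) (fun i : Fin j.val => p (Fin.castLE j.isLt.le i))).rank = n - 1)
    (q : Fin n → Fin n → ℝ)
    (hqortho : ∀ i j : Fin n, q i ⬝ᵥ q j = if i = j then 1 else 0)
    (hqker : ∀ j : Fin n, (G j).mulVec (q j) = 0) :
    ∀ j : Fin n, q j = p j ∨ q j = -(p j) := by
  have main : ∀ m : ℕ, ∀ j : Fin n, j.val = m → (q j = p j ∨ q j = -(p j)) := by
    intro m
    induction m using Nat.strong_induction_on with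
    | _ m ih =>
      intro j hjm
      set M := stack (G j) (fun i : Fin j.val => p (Fin.castLE j.isLt.le i)) with hM
      -- the kernel of M has dimension 1
      have hrn := LinearMap.finrank_range_add_finrank_ker M.mulVecLin
      have hdim : Module.finrank ℝ (LinearMap.ker M.mulVecLin) = 1 := by
        rw [Module.finrank_pi] at hrn
        have h1 : Module.finrank ℝ (LinearMap.range M.mulVecLin) = n - 1 := hrank j
        rw [h1, Fintype.card_fin] at hrn
        omega
      -- p j lies in the kernel
      have hpmem : p j ∈ LinearMap.ker M.mulVecLin := by
        rw [LinearMap.mem_ker, Matrix.mulVecLin_apply]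
        refine stack_mulVec_eq_zero _ _ _ (hpker j) (fun i => ?_)
        have hne : (Fin.castLE j.isLt.le i) ≠ j := by
          intro h
          have := congrArg Fin.val h
          simp [Fin.castLE] at this
          exact absurd this (Nat.ne_of_lt i.isLt)
        simpa [hne] using hportho (Fin.castLE j.isLt.le i) j
      -- q j lies in the kernel, using the induction hypothesis
      have hqmem : q j ∈ LinearMap.ker M.mulVecLin := by
        rw [LinearMap.mem_ker, Matrix.mulVecLin_apply]
        refine stack_mulVec_eq_zero _ _ _ (hqker j) (fun i => ?_)
        have hne : (Fin.castLE j.isLt.le i) ≠ j := by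
          intro h
          have := congrArg Fin.val h
          simp [Fin.castLE] at this
          exact absurd this (Nat.ne_of_lt i.isLt)
        have hqz : q (Fin.castLE j.isLt.le i) ⬝ᵥ q j = 0 := by
          simpa [hne] using hqortho (Fin.castLE j.isLt.le i) j
        rcases ih i.val (by omega) (Fin.castLE j.isLt.le i) rfl with h | h
        · rw [← h]; exact hqz
        · have : q (Fin.castLE j.isLt.le i) = -(p (Fin.castLE j.isLt.le i)) := h
          have := congrArg Neg.neg this
          rw [neg_neg] at this
          rw [← this, neg_dotProduct, hqz, neg_zero]
      -- p j ≠ 0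
      have hpj1 : p j ⬝ᵥ p j = 1 := by simpa using hportho j j
      have hpne : p j ≠ 0 := by
        intro h
        rw [h] at hpj1
        simp at hpj1
      have hpne' : (⟨p j, hpmem⟩ : LinearMap.ker M.mulVecLin) ≠ 0 := by
        intro h
        exact hpne (congrArg Subtype.val h)
      -- q j = c • p j
      obtain ⟨c, hc⟩ := exists_smul_eq_of_finrank_eq_one hdim hpne'
        (⟨q j, hqmem⟩ : LinearMap.ker M.mulVecLin)
      have hcq : c • p j = q j := congrArg Subtype.val hc
      -- c² = 1
      have hqj1 : q j ⬝ᵥ q j = 1 := by simpa using hqortho j j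
      have hc2 : c * c = 1 := by
        rw [← hcq] at hqj1
        rw [smul_dotProduct, dotProduct_smul, hpj1] at hqj1
        simpa [mul_assoc] using hqj1
      have : c = 1 ∨ c = -1 := by
        have h : (c - 1) * (c + 1) = 0 := by ring_nf; linarith
        rcases mul_eq_zero.mp h with h | h
        · left; linarith
        · right; linarith
      rcases this with rfl | rfl
      · left; rw [← hcq, one_smul]
      · right; rw [← hcq, neg_smul, one_smul]
  intro j
  exact main j.val j rfl
end
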